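/- Let f : [a,b) → ℝ be convex, x ∈ [a,b)^n, p nonnegative and q positive probability n-tuples. Let M₁ = max_i(pᵢ/qᵢ) = p_j/q_j at a fixed index j; define p'ᵢ = pᵢ − M₁qᵢ, x'ᵢ = xᵢ for i ≠ j, and p'_j = M₁, x'_j = ∑qᵢxᵢ; set M₂ = max_i(p'ᵢ/qᵢ). Then J(f,x,p) ≤ M₁·J(f,x,q) + M₂·J(f,x',q). -/

import Mathlib

/-!
Write `J(f, y, w) = ∑ wᵢ f(yᵢ) - f(∑ wᵢ yᵢ)`. If `∑ wᵢ = ∑ qᵢ = 1` and `wᵢ ≤ M qᵢ`, then `M ≥ 1` and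
`q = M⁻¹ δ_z + ∑ (qᵢ - M⁻¹ wᵢ) δ_{yᵢ}` with `z = ∑ wᵢ yᵢ` is a convex combination, so Jensen gives
`J(f, y, w) ≤ M J(f, y, q)` even for signed `w`, as long as `z` lies in the domain of `f`.

Since `p_j = M₁ q_j`, the weight `p - M₁ q` vanishes at `j`; moving the mass `M₁` there, onto the point
`x'_j = ∑ qᵢ xᵢ`, gives weights `p'` with `∑ p'ᵢ = 1` and `∑ p'ᵢ x'ᵢ = ∑ pᵢ xᵢ`, hence
`J(f, x', p') = J(f, x, p) - M₁ J(f, x, q)`. The signed inequality for `p'`, `x'` and `M = M₂` concludes.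
-/

open Finset

variable {ι : Type*} [Fintype ι]

noncomputable def jensenGap {E : Type*} [AddCommGroup E] [Module ℝ E]
    (f : E → ℝ) (y : ι → E) (w : ι → ℝ) : ℝ :=
  ∑ i, w i * f (y i) - f (∑ i, w i • y i)

section Jensen

variable {E : Type*} [AddCommGroup E] [Module ℝ E] {s : Set E} {f : E → ℝ}

theorem ConvexOn.map_smul_add_sum_le (hf : ConvexOn ℝ s f) {t : ℝ} {v : ι → ℝ} {z : E}
    {y : ι → E} (ht : 0 ≤ t) (hv : ∀ i, 0 ≤ v i) (hsum : t + ∑ i, v i = 1) (hz : z ∈ s)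
    (hy : ∀ i, y i ∈ s) :
    f (t • z + ∑ i, v i • y i) ≤ t * f z + ∑ i, v i * f (y i) := by
  have h := hf.map_sum_le (t := univ) (w := fun o : Option ι => o.elim t v)
    (p := fun o => o.elim z y) (by rintro (_ | i) _ <;> simp [ht, hv])
    (by simpa [Fintype.sum_option] using hsum) (by rintro (_ | i) _ <;> simp [hz, hy])
  simpa [Fintype.sum_option] using h

theorem ConvexOn.jensenGap_le_mul_jensenGap (hf : ConvexOn ℝ s f) {w q : ι → ℝ} {y : ι → E}
    {M : ℝ} (hy : ∀ i, y i ∈ s) (hws : ∑ i, w i = 1) (hqs : ∑ i, q i = 1)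
    (hwq : ∀ i, w i ≤ M * q i) (hz : ∑ i, w i • y i ∈ s) :
    jensenGap f y w ≤ M * jensenGap f y q := by
  have hM : 1 ≤ M :=
    calc 1 = ∑ i, w i := hws.symm
      _ ≤ ∑ i, M * q i := sum_le_sum fun i _ => hwq i
      _ = M := by rw [← mul_sum, hqs, mul_one]
  have hM₀ : 0 < M := by linarith
  set z := ∑ i, w i • y i
  have hv : ∀ i, 0 ≤ q i - M⁻¹ * w i := fun i => by
    rw [sub_nonneg, inv_mul_le_iff₀ hM₀]; exact hwq i
  have hsum : M⁻¹ + ∑ i, (q i - M⁻¹ * w i) = 1 := by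
    rw [sum_sub_distrib, ← mul_sum, hqs, hws]; ring
  have hmean : M⁻¹ • z + ∑ i, (q i - M⁻¹ * w i) • y i = ∑ i, q i • y i := by
    simp only [sub_smul, mul_smul, sum_sub_distrib, ← smul_sum, z]; abel
  have hjensen := hf.map_smul_add_sum_le (inv_nonneg.2 hM₀.le) hv hsum hz hy
  simp only [hmean, sub_mul, mul_assoc, sum_sub_distrib, ← mul_sum] at hjensen
  have := mul_le_mul_of_nonneg_left hjensen hM₀.le
  rw [mul_add, mul_sub, ← mul_assoc, ← mul_assoc, mul_inv_cancel₀ hM₀.ne'] at this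
  unfold jensenGap
  linarith

end Jensen

theorem sum_mul_apply_eq_of_reweight {α : Type*} [DecidableEq ι] {p q p' : ι → ℝ}
    {x x' : ι → α} {j : ι} {M : ℝ} {c : α} (hj : p j = M * q j)
    (hp' : ∀ i, p' i = if i = j then M else p i - M * q i)
    (hx' : ∀ i, x' i = if i = j then c else x i) (g : α → ℝ) :
    ∑ i, p' i * g (x' i) = ∑ i, p i * g (x i) - M * ∑ i, q i * g (x i) + M * g c := by
  have hterm : ∀ i, p' i * g (x' i) = (p i - M * q i) * g (x i) + if i = j then M * g c else 0 := by
    intro i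
    rw [hp', hx']
    split_ifs with h
    · subst h; rw [hj, sub_self, zero_mul, zero_add]
    · rw [add_zero]
  simp only [hterm, sum_add_distrib, sub_mul, sum_sub_distrib, mul_sum, mul_assoc,
    sum_ite_eq', mem_univ, if_true]

theorem stmt13_general {a b : ℝ} (f : ℝ → ℝ) (hf : ConvexOn ℝ (Set.Ico a b) f)
    {n : ℕ} (hn : 0 < n) (x : Fin n → ℝ) (hx : ∀ i, x i ∈ Set.Ico a b)
    (p q : Fin n → ℝ) (hp : ∀ i, 0 ≤ p i) (hq : ∀ i, 0 < q i)
    (hps : ∑ i, p i = 1) (hqs : ∑ i, q i = 1)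
    (j : Fin n) (M₁ : ℝ) (hM₁ : M₁ = p j / q j)
    (p' x' : Fin n → ℝ)
    (hp' : ∀ i, p' i = if i = j then M₁ else p i - M₁ * q i)
    (hx' : ∀ i, x' i = if i = j then ∑ k, q k * x k else x i)
    (M₂ : ℝ)
    (hM₂ : M₂ = Finset.univ.sup' ⟨⟨0, hn⟩, Finset.mem_univ _⟩ (fun i => p' i / q i)) :
    ∑ i, p i * f (x i) - f (∑ i, p i * x i) ≤
      M₁ * (∑ i, q i * f (x i) - f (∑ i, q i * x i)) +
      M₂ * (∑ i, q i * f (x' i) - f (∑ i, q i * x' i)) := by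
  have hj : p j = M₁ * q j := by rw [hM₁, div_mul_cancel₀ _ (hq j).ne']
  have hp'q : ∀ i, p' i ≤ M₂ * q i := fun i =>
    (div_le_iff₀ (hq i)).1 (hM₂ ▸ le_sup' (fun i => p' i / q i) (mem_univ i))
  have hmem : ∀ {w : Fin n → ℝ}, (∀ i, 0 ≤ w i) → ∑ i, w i = 1 → ∑ i, w i * x i ∈ Set.Ico a b :=
    fun hw hws => by
      simpa using (convex_Ico a b).sum_mem (fun i _ => hw i) hws (fun i _ => hx i)
  have hx'mem : ∀ i, x' i ∈ Set.Ico a b := fun i => by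
    rw [hx']; split_ifs
    exacts [hmem (fun i => (hq i).le) hqs, hx i]
  have hsum := sum_mul_apply_eq_of_reweight hj hp' hx' (fun _ => 1)
  have hmean := sum_mul_apply_eq_of_reweight hj hp' hx' id
  have hvalue := sum_mul_apply_eq_of_reweight hj hp' hx' f
  simp only [mul_one, hps, hqs, sub_add_cancel] at hsum
  simp only [id, sub_add_cancel] at hmean
  have key := hf.jensenGap_le_mul_jensenGap hx'mem hsum hqs hp'q
    (by simpa [hmean] using hmem hp hps)
  simp only [jensenGap, smul_eq_mul, hmean, hvalue] at key
  linarith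

/-- The `N = 2` case of Theorem 3:
`J(f,x,p) ≤ M₁·J(f,x,q) + M₂·J(f,x',q)`. -/
theorem stmt13 {a b : ℝ} (f : ℝ → ℝ) (hf : ConvexOn ℝ (Set.Ico a b) f)
    {n : ℕ} (hn : 0 < n) (x : Fin n → ℝ) (hx : ∀ i, x i ∈ Set.Ico a b)
    (p q : Fin n → ℝ) (hp : ∀ i, 0 ≤ p i) (hq : ∀ i, 0 < q i)
    (hps : ∑ i, p i = 1) (hqs : ∑ i, q i = 1)
    (j : Fin n) (M₁ : ℝ) (hM₁ : M₁ = p j / q j)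
    (hmax : ∀ i, p i / q i ≤ M₁)
    (p' x' : Fin n → ℝ)
    (hp' : ∀ i, p' i = if i = j then M₁ else p i - M₁ * q i)
    (hx' : ∀ i, x' i = if i = j then ∑ k, q k * x k else x i)
    (M₂ : ℝ)
    (hM₂ : M₂ = Finset.univ.sup' ⟨⟨0, hn⟩, Finset.mem_univ _⟩ (fun i => p' i / q i)) :
    ∑ i, p i * f (x i) - f (∑ i, p i * x i) ≤
      M₁ * (∑ i, q i * f (x i) - f (∑ i, q i * x i)) +
      M₂ * (∑ i, q i * f (x' i) - f (∑ i, q i * x' i)) :=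
  stmt13_general f hf hn x hx p q hp hq hps hqs j M₁ hM₁ p' x' hp' hx' M₂ hM₂
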